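/- arXiv:1610.02410 — 4 statements merged into one kernel-verified Lean document; each statement's English description precedes it below -/
import Mathlib

section
/- If φ and ψ are elements of infinite order in GL(2,ℤ) and φ^n = ψ^n for some nonzero integer n, then φ = ψ or φ = -ψ. -/
/-!
Since `φ` has infinite order, `φ ^ n = ψ ^ n` is not `±1`, i.e. not a scalar matrix. Up to a
nonzero integer factor, every matrix commuting with a non-scalar `2 × 2` matrix `M` is a
combination `x • M + y • 1`; so the centralizer of `φ ^ n` is commutative, and `φ` and `ψ` commute.
Then `γ = φ * ψ⁻¹` satisfies `γ ^ n = 1` and commutes with `φ`. If `γ` is scalar, it is `±1`.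
Otherwise `r • φ = u • γ + v • 1` with `r, u ≠ 0`, so the discriminants `tr² - 4 det` satisfy
`r² disc φ = u² disc γ`. A non-scalar element of `GL(2, ℤ)` has finite order exactly when its
discriminant is negative or a nonzero square: its powers are `U_{k+1} • M - (det M * U_k) • 1` for
the Lucas sequence `U` of (trace, det), which never vanishes once `|tr|` exceeds `max 0 det`.
This property is preserved under multiplication by nonzero rational squares, so `φ` would have
finite order.
-/

open Matrix

def lucasU {R : Type*} [CommRing R] (t d : R) : ℕ → R
  | 0 => 0
  | 1 => 1
  | k + 2 => t * lucasU t d (k + 1) - d * lucasU t d k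

section lucasU

variable {R : Type*} [CommRing R]

lemma lucasU_neg_left (t d : R) (k : ℕ) :
    lucasU (-t) d k = (-1) ^ (k + 1) * lucasU t d k := by
  induction k using lucasU.induct with
  | case1 => simp [lucasU]
  | case2 => simp [lucasU]
  | case3 k ih₁ ih₀ =>
    simp only [lucasU, ih₁, ih₀, Nat.succ_eq_add_one]
    ring

variable [LinearOrder R] [IsStrictOrderedRing R] {t d : R}

lemma lucasU_monotone (ht : 1 ≤ t) (hd : d + 1 ≤ t) : Monotone (lucasU t d) := by
  have key : ∀ k, 0 ≤ lucasU t d k ∧ lucasU t d k ≤ lucasU t d (k + 1) := by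
    intro k
    induction k with
    | zero => simp [lucasU]
    | succ k ih =>
      obtain ⟨h₀, h₁⟩ := ih
      refine ⟨h₀.trans h₁, ?_⟩
      change _ ≤ t * _ - d * _
      rcases le_total d 0 with hd₀ | hd₀ <;> nlinarith
  exact monotone_nat_of_le_succ fun k => (key k).2

lemma lucasU_succ_ne_zero (ht : 1 ≤ |t|) (hd : d + 1 ≤ |t|) (k : ℕ) :
    lucasU t d (k + 1) ≠ 0 := by
  have pos : ∀ {s : R}, 1 ≤ s → d + 1 ≤ s → 0 < lucasU s d (k + 1) := fun hs hds =>
    zero_lt_one.trans_le (lucasU_monotone hs hds (Nat.le_add_left 1 k))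
  rcases abs_cases t with ⟨habs, -⟩ | ⟨habs, -⟩ <;> rw [habs] at ht hd
  · exact (pos ht hd).ne'
  · rw [← neg_neg t, lucasU_neg_left]
    exact mul_ne_zero (pow_ne_zero _ (neg_ne_zero.2 one_ne_zero)) (pos ht hd).ne'

end lucasU

lemma Int.eq_zero_of_sq_sub_sq_eq_four {a b : ℤ} (h : a ^ 2 - b ^ 2 = 4) : b = 0 := by
  have hab : |b| < |a| := sq_lt_sq.1 (by linarith)
  have ha : |a| ≤ 2 := by
    have : |b| + 1 ≤ |a| := hab
    nlinarith [sq_abs a, sq_abs b, abs_nonneg b]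
  have hb : b ^ 2 ≤ 0 := by nlinarith [sq_abs a, abs_nonneg a]
  exact pow_eq_zero_iff two_ne_zero |>.1 (le_antisymm hb (sq_nonneg b))

lemma Int.sq_sub_four_mul_neg_or_isSquare_iff {t d : ℤ} (hd : d = 1 ∨ d = -1) :
    (t ^ 2 - 4 * d < 0 ∨ (t ^ 2 - 4 * d ≠ 0 ∧ IsSquare (t ^ 2 - 4 * d))) ↔ t = 0 ∨ |t| ≤ d := by
  rcases hd with rfl | rfl
  · constructor
    · rintro (h | ⟨h₀, k, hk⟩)
      · right
        rw [abs_le]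
        constructor <;> nlinarith
      · obtain rfl := Int.eq_zero_of_sq_sub_sq_eq_four (a := t) (b := k) (by linear_combination hk)
        exact h₀ (hk.trans (mul_zero 0)) |>.elim
    · rintro (rfl | h)
      · norm_num
      · left
        rw [abs_le] at h
        nlinarith
  · constructor
    · rintro (h | ⟨-, k, hk⟩)
      · nlinarith
      · exact Or.inl
          (Int.eq_zero_of_sq_sub_sq_eq_four (a := k) (b := t) (by linear_combination -hk))
    · rintro (rfl | h)
      · exact Or.inr ⟨by norm_num, 2, by norm_num⟩
      · have := abs_nonneg t
        omega

lemma Int.neg_or_isSquare_of_sq_mul_eq_sq_mul {r u D E : ℤ} (hr : r ≠ 0) (hu : u ≠ 0)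
    (h : r ^ 2 * D = u ^ 2 * E) (hE : E < 0 ∨ (E ≠ 0 ∧ IsSquare E)) :
    D < 0 ∨ (D ≠ 0 ∧ IsSquare D) := by
  have hr₂ : 0 < r ^ 2 := by positivity
  have hu₂ : 0 < u ^ 2 := by positivity
  rcases hE with hE | ⟨hE, k, rfl⟩
  · left
    nlinarith
  · right
    have hD : D ≠ 0 := by
      rintro rfl
      simp_all
    obtain ⟨s, hs⟩ : r ∣ u * k := (Int.pow_dvd_pow_iff two_ne_zero).1 ⟨D, by linear_combination -h⟩
    exact ⟨hD, s, mul_left_cancel₀ hr₂.ne' (by linear_combination h + (u * k + r * s) * hs)⟩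

lemma IsOfFinOrder.of_zpow {G : Type*} [Group G] {x : G} {n : ℤ} (h : IsOfFinOrder (x ^ n))
    (hn : n ≠ 0) : IsOfFinOrder x := by
  obtain ⟨m, hm, hxm⟩ := isOfFinOrder_iff_zpow_eq_one.1 h
  exact isOfFinOrder_iff_zpow_eq_one.2 ⟨n * m, mul_ne_zero hn hm, by rw [_root_.zpow_mul, hxm]⟩

namespace Matrix

lemma smul_one_mem_range_scalar {n R : Type*} [Fintype n] [DecidableEq n] [CommRing R] (c : R) :
    c • (1 : Matrix n n R) ∈ Set.range (scalar n) :=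
  ⟨c, by rw [scalar_apply, smul_one_eq_diagonal]⟩

variable {R : Type*} [CommRing R]

lemma sq_eq_trace_smul_sub_det_smul (M : Matrix (Fin 2) (Fin 2) R) :
    M ^ 2 = M.trace • M - M.det • 1 := by
  ext i j
  fin_cases i <;> fin_cases j <;>
    simp [sq, mul_apply, trace_fin_two, det_fin_two] <;> ring

lemma pow_succ_eq_lucasU (M : Matrix (Fin 2) (Fin 2) R) (k : ℕ) :
    M ^ (k + 1) = lucasU M.trace M.det (k + 1) • M - (M.det * lucasU M.trace M.det k) • 1 := by
  induction k with
  | zero => simp [lucasU]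
  | succ k ih =>
    rw [pow_succ, ih, sub_mul, smul_mul_assoc, smul_mul_assoc, one_mul, ← sq,
      sq_eq_trace_smul_sub_det_smul, lucasU]
    module

lemma pow_twelve_eq_one_of_trace_eq_zero_or_abs_trace_le_det {M : Matrix (Fin 2) (Fin 2) ℤ}
    (hd : M.det = 1 ∨ M.det = -1) (h : M.trace = 0 ∨ |M.trace| ≤ M.det) : M ^ 12 = 1 := by
  -- `(trace, det)` is `(0, -1)`, `(0, 1)`, `(1, 1)` or `(-1, 1)`: orders 2, 4, 6, 3.
  obtain ⟨h₁₂, h₁₁⟩ : lucasU M.trace M.det 12 = 0 ∧ M.det * lucasU M.trace M.det 11 = -1 := by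
    generalize M.trace = t at h ⊢
    rcases hd with hd | hd <;> rw [hd] at h ⊢
    · have ht : t = -1 ∨ t = 0 ∨ t = 1 := by
        rcases h with h | h
        · exact Or.inr (Or.inl h)
        · rw [abs_le] at h
          omega
      rcases ht with rfl | rfl | rfl <;> decide
    · obtain rfl : t = 0 := h.resolve_right fun h' => by linarith [abs_nonneg t]
      decide
  rw [pow_succ_eq_lucasU M 11, h₁₂, h₁₁]
  simp

lemma mem_range_scalar_fin_two_iff {M : Matrix (Fin 2) (Fin 2) R} :
    M ∈ Set.range (scalar (Fin 2)) ↔ M 0 1 = 0 ∧ M 1 0 = 0 ∧ M 0 0 = M 1 1 := by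
  constructor
  · rintro ⟨c, rfl⟩
    simp
  · rintro ⟨h₀₁, h₁₀, h⟩
    refine ⟨M 0 0, ?_⟩
    ext i j
    fin_cases i <;> fin_cases j <;> simp [h₀₁, h₁₀, h]

lemma mem_range_scalar_of_smul_mem [IsDomain R] {r : R} (hr : r ≠ 0)
    {M : Matrix (Fin 2) (Fin 2) R} (h : r • M ∈ Set.range (scalar (Fin 2))) :
    M ∈ Set.range (scalar (Fin 2)) := by
  rw [mem_range_scalar_fin_two_iff] at h ⊢
  simpa [hr] using h

lemma exists_smul_eq_smul_add_smul_one_of_commute {M N : Matrix (Fin 2) (Fin 2) R}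
    (hM : M ∉ Set.range (scalar (Fin 2))) (h : Commute M N) :
    ∃ r x y : R, r ≠ 0 ∧ r • N = x • M + y • 1 := by
  have e : ∀ i j, (M * N) i j = (N * M) i j := fun i j => by rw [h.eq]
  have e₀₀ := e 0 0
  have e₀₁ := e 0 1
  have e₁₀ := e 1 0
  simp only [mul_apply, Fin.sum_univ_two] at e₀₀ e₀₁ e₁₀
  rw [mem_range_scalar_fin_two_iff] at hM
  by_cases hb : M 0 1 = 0
  · by_cases hc : M 1 0 = 0
    · refine ⟨M 0 0 - M 1 1, N 0 0 - N 1 1, M 0 0 * N 1 1 - N 0 0 * M 1 1,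
        sub_ne_zero.2 fun had => hM ⟨hb, hc, had⟩, ?_⟩
      ext i j
      fin_cases i <;> fin_cases j <;> simp [hb, hc] at e₀₀ e₀₁ e₁₀ ⊢ <;> grind
    · refine ⟨M 1 0, N 1 0, M 1 0 * N 0 0 - N 1 0 * M 0 0, hc, ?_⟩
      ext i j
      fin_cases i <;> fin_cases j <;> simp <;> grind
  · refine ⟨M 0 1, N 0 1, M 0 1 * N 0 0 - N 0 1 * M 0 0, hb, ?_⟩
    ext i j
    fin_cases i <;> fin_cases j <;> simp <;> grind

lemma commute_of_commute_of_notMem_range_scalar [IsDomain R] {M A B : Matrix (Fin 2) (Fin 2) R}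
    (hM : M ∉ Set.range (scalar (Fin 2))) (hA : Commute M A) (hB : Commute M B) :
    Commute A B := by
  obtain ⟨r, x, y, hr, hrA⟩ := exists_smul_eq_smul_add_smul_one_of_commute hM hA
  obtain ⟨s, x', y', hs, hsB⟩ := exists_smul_eq_smul_add_smul_one_of_commute hM hB
  have hrs : Commute (r • A) (s • B) := by
    rw [hrA, hsB, commute_iff_eq]
    simp only [add_mul, mul_add, smul_mul_smul_comm, one_mul, mul_one]
    module
  have := hrs.eq
  rw [smul_mul_smul_comm, smul_mul_smul_comm, mul_comm s r] at this
  exact smul_right_injective _ (mul_ne_zero hr hs) this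

lemma discr_smul_add_smul_one (M : Matrix (Fin 2) (Fin 2) R) (x y : R) :
    (x • M + y • 1).discr = x ^ 2 * M.discr := by
  simp [discr_fin_two, trace_fin_two, det_fin_two]
  ring

end Matrix

namespace Matrix.GeneralLinearGroup

variable {n : Type*} [Fintype n] [DecidableEq n]

lemma det_eq_one_or_neg_one (g : GL n ℤ) : g.val.det = 1 ∨ g.val.det = -1 :=
  Int.isUnit_iff.1 ((isUnit_iff_isUnit_det _).1 g.isUnit)

lemma eq_one_or_eq_neg_one_of_mem_range_scalar [Nonempty n] {g : GL n ℤ}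
    (h : g.val ∈ Set.range (Matrix.scalar n)) : g = 1 ∨ g = -1 := by
  obtain ⟨c, hc⟩ := h
  obtain ⟨i⟩ := ‹Nonempty n›
  have hu : IsUnit c := by
    refine IsUnit.of_mul_eq_one (g⁻¹.val i i) ?_
    have := congrFun (congrFun g.mul_inv i) i
    rwa [← hc, scalar_apply, diagonal_mul, one_apply_eq] at this
  rcases Int.isUnit_iff.1 hu with rfl | rfl
  · exact Or.inl (Units.ext (by simp [← hc]))
  · exact Or.inr (Units.ext (by simp [← hc]))

lemma isOfFinOrder_of_mem_range_scalar [Nonempty n] {g : GL n ℤ}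
    (h : g.val ∈ Set.range (Matrix.scalar n)) : IsOfFinOrder g := by
  rcases eq_one_or_eq_neg_one_of_mem_range_scalar h with rfl | rfl
  · exact IsOfFinOrder.one
  · exact isOfFinOrder_iff_pow_eq_one.2 ⟨2, two_pos, by simp⟩

theorem isOfFinOrder_iff_trace_eq_zero_or_abs_trace_le_det {g : GL (Fin 2) ℤ}
    (hg : g.val ∉ Set.range (Matrix.scalar (Fin 2))) :
    IsOfFinOrder g ↔ g.val.trace = 0 ∨ |g.val.trace| ≤ g.val.det := by
  constructor
  · intro hfin
    obtain ⟨m, hm, hgm⟩ := isOfFinOrder_iff_pow_eq_one.1 hfin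
    obtain ⟨k, rfl⟩ := Nat.exists_eq_succ_of_ne_zero hm.ne'
    have hpow := pow_succ_eq_lucasU g.val k
    rw [← Units.val_pow_eq_pow_val, hgm, Units.val_one, eq_sub_iff_add_eq] at hpow
    have hU : lucasU g.val.trace g.val.det (k + 1) = 0 := by
      by_contra hU
      refine hg (mem_range_scalar_of_smul_mem hU ?_)
      rw [← hpow]
      convert smul_one_mem_range_scalar (1 + g.val.det * lucasU g.val.trace g.val.det k) using 1
      rw [add_smul, one_smul]
    by_contra! hcon
    exact lucasU_succ_ne_zero (Int.one_le_abs hcon.1) (by linarith [hcon.2]) k hU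
  · intro h
    refine isOfFinOrder_iff_pow_eq_one.2 ⟨12, by norm_num, Units.ext ?_⟩
    rw [Units.val_pow_eq_pow_val, Units.val_one]
    exact pow_twelve_eq_one_of_trace_eq_zero_or_abs_trace_le_det (det_eq_one_or_neg_one g) h

theorem isOfFinOrder_iff_discr {g : GL (Fin 2) ℤ} (hg : g.val ∉ Set.range (Matrix.scalar (Fin 2))) :
    IsOfFinOrder g ↔ g.val.discr < 0 ∨ (g.val.discr ≠ 0 ∧ IsSquare g.val.discr) := by
  rw [isOfFinOrder_iff_trace_eq_zero_or_abs_trace_le_det hg, discr_fin_two,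
    Int.sq_sub_four_mul_neg_or_isSquare_iff (det_eq_one_or_neg_one g)]

end Matrix.GeneralLinearGroup

theorem roots_unique_GL2Z_general (φ ψ : GL (Fin 2) ℤ)
    (hφ : ¬ IsOfFinOrder φ)
    (n : ℤ) (hn : n ≠ 0) (h : φ ^ n = ψ ^ n) :
    φ = ψ ∨ φ = -ψ := by
  have hφs : φ.val ∉ Set.range (scalar (Fin 2)) := fun hs =>
    hφ (GeneralLinearGroup.isOfFinOrder_of_mem_range_scalar hs)
  have hφns : (φ ^ n).val ∉ Set.range (scalar (Fin 2)) := fun hs =>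
    hφ ((GeneralLinearGroup.isOfFinOrder_of_mem_range_scalar hs).of_zpow hn)
  have hcomm : Commute φ ψ := Units.ext <| (commute_of_commute_of_notMem_range_scalar hφns
    ((Commute.refl φ).zpow_left n).units_val (h ▸ ((Commute.refl ψ).zpow_left n).units_val)).eq
  set γ := φ * ψ⁻¹
  have hγ : IsOfFinOrder γ := isOfFinOrder_iff_zpow_eq_one.2
    ⟨n, hn, by rw [hcomm.inv_right.mul_zpow, _root_.inv_zpow, h, mul_inv_cancel]⟩
  by_cases hγs : γ.val ∈ Set.range (scalar (Fin 2))
  · rcases GeneralLinearGroup.eq_one_or_eq_neg_one_of_mem_range_scalar hγs with h₁ | h₁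
    · exact Or.inl (mul_inv_eq_one.1 h₁)
    · exact Or.inr (by rw [mul_inv_eq_iff_eq_mul.1 h₁, neg_one_mul])
  obtain ⟨r, u, v, hr, hrφ⟩ := exists_smul_eq_smul_add_smul_one_of_commute hγs
    ((Commute.refl φ).mul_left hcomm.symm.inv_left).units_val
  have hu : u ≠ 0 := by
    rintro rfl
    refine hφs (mem_range_scalar_of_smul_mem hr ?_)
    rw [hrφ, zero_smul, zero_add]
    exact smul_one_mem_range_scalar v
  have hdiscr := discr_smul_add_smul_one φ.val r 0
  rw [zero_smul, add_zero, hrφ, discr_smul_add_smul_one] at hdiscr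
  refine absurd ((GeneralLinearGroup.isOfFinOrder_iff_discr hφs).2 ?_) hφ
  exact Int.neg_or_isSquare_of_sq_mul_eq_sq_mul hr hu hdiscr.symm
    ((GeneralLinearGroup.isOfFinOrder_iff_discr hγs).1 hγ)

theorem roots_unique_GL2Z (φ ψ : GL (Fin 2) ℤ)
    (hφ : ¬ IsOfFinOrder φ) (hψ : ¬ IsOfFinOrder ψ)
    (n : ℤ) (hn : n ≠ 0) (h : φ ^ n = ψ ^ n) :
    φ = ψ ∨ φ = -ψ :=
  roots_unique_GL2Z_general φ ψ hφ n hn h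
end

section
/- Every element of GL(2,ℤ) of trace 0, determinant -1, and having 1 as an eigenvalue is an involution, and is conjugate in GL(2,ℤ) to either diag(1,-1) or the matrix [[0,1],[1,0]]. -/
/-!
By Cayley–Hamilton `A² - (tr A) A + (det A) 1 = 0`, so `A² = 1`. Dividing a fixed vector by the
gcd of its entries gives a primitive fixed vector, and some `g ∈ SL(2, ℤ)` sends it to `e₀`; as
the trace is `0`, `g A g⁻¹ = [[1, m], [0, -1]]`. Conjugating by the shear `[[1, k], [0, 1]]`
replaces `m` by `m - 2k`, which leaves `m = 0` or `m = 1`, and `[[1, 1], [0, -1]]` is conjugated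
to `[[0, 1], [1, 0]]` by `[[1, 0], [1, 1]]`.
-/

open scoped MatrixGroups

namespace Matrix

variable {R : Type*} [CommRing R]

theorem sq_eq_one_of_trace_eq_zero_of_det_eq_neg_one [Nontrivial R]
    {A : Matrix (Fin 2) (Fin 2) R} (htr : A.trace = 0) (hdet : A.det = -1) : A ^ 2 = 1 := by
  have h := A.aeval_self_charpoly
  rw [charpoly_fin_two, htr, hdet] at h
  rw [← sub_eq_zero]
  simpa [sub_eq_add_neg] using h

theorem units_conj_mulVec_mulVec {n : Type*} [Fintype n] [DecidableEq n]
    (P : (Matrix n n R)ˣ) (A : Matrix n n R) (w : n → R) :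
    (P.val * A * P⁻¹.val) *ᵥ (P.val *ᵥ w) = P.val *ᵥ (A *ᵥ w) := by
  rw [mulVec_mulVec, Matrix.mul_assoc, Units.inv_mul, Matrix.mul_one, mulVec_mulVec]

theorem eq_of_trace_eq_zero_of_mulVec_single_eq_self {B : Matrix (Fin 2) (Fin 2) R}
    (htr : B.trace = 0) (hfix : B *ᵥ Pi.single 0 1 = Pi.single 0 1) :
    B = !![1, B 0 1; 0, -1] := by
  have h₀₀ : B 0 0 = 1 := by simpa [mulVec, dotProduct] using congrFun hfix 0
  have h₁₀ : B 1 0 = 0 := by simpa [mulVec, dotProduct] using congrFun hfix 1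
  have h₁₁ : B 1 1 = -1 := by
    rw [trace_fin_two] at htr
    linear_combination htr - h₀₀
  conv_lhs => rw [eta_fin_two B, h₀₀, h₁₀, h₁₁]

theorem exists_isCoprime_mulVec_eq_self {A : Matrix (Fin 2) (Fin 2) ℤ} {v : Fin 2 → ℤ}
    (hv : v ≠ 0) (hAv : A *ᵥ v = v) : ∃ w : Fin 2 → ℤ, IsCoprime (w 0) (w 1) ∧ A *ᵥ w = w := by
  have hg : 0 < Int.gcd (v 0) (v 1) := by
    refine Int.gcd_pos_iff.mpr (not_and_or.mp fun h => hv ?_)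
    ext i; fin_cases i <;> simp [h.1, h.2]
  obtain ⟨g, p, q, hg0, hpq, hp, hq⟩ := Int.exists_gcd_one' hg
  have hv' : v = (g : ℤ) • ![p, q] := by
    ext i; fin_cases i <;> simp [hp, hq, mul_comm]
  refine ⟨![p, q], Int.isCoprime_iff_gcd_eq_one.mpr hpq, ?_⟩
  rw [hv', mulVec_smul] at hAv
  exact smul_right_injective _ (by positivity) hAv

theorem SpecialLinearGroup.exists_mulVec_eq_single_of_isCoprime {w : Fin 2 → R}
    (hw : IsCoprime (w 0) (w 1)) :
    ∃ g : SL(2, R), (g : Matrix (Fin 2) (Fin 2) R) *ᵥ w = Pi.single 0 1 := by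
  obtain ⟨x, y, hxy⟩ := hw
  refine ⟨⟨!![x, y; -w 1, w 0], by rw [det_fin_two_of]; linear_combination hxy⟩, ?_⟩
  ext i; fin_cases i
  · simpa [mulVec, dotProduct] using hxy
  · simp [mulVec, dotProduct, mul_comm]

theorem semiconjBy_shear (k m : R) :
    SemiconjBy !![1, k; 0, 1] !![1, m; 0, -1] !![1, m - 2 * k; 0, -1] := by
  rw [SemiconjBy, mul_fin_two, mul_fin_two]
  ext i j
  fin_cases i <;> fin_cases j <;> simp
  ring

theorem semiconjBy_swap :
    SemiconjBy !![(1 : R), 0; 1, 1] !![1, 1; 0, -1] !![0, 1; 1, 0] := by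
  simp only [SemiconjBy, mul_fin_two]
  norm_num

theorem exists_semiconjBy_diag_or_swap (m : ℤ) :
    ∃ Q : GL (Fin 2) ℤ, SemiconjBy Q.val !![1, m; 0, -1] !![1, 0; 0, -1] ∨
      SemiconjBy Q.val !![1, m; 0, -1] !![0, 1; 1, 0] := by
  let shear (k : ℤ) : SL(2, ℤ) := ⟨!![1, k; 0, 1], by simp [det_fin_two_of]⟩
  let lower : SL(2, ℤ) := ⟨!![1, 0; 1, 1], by simp [det_fin_two_of]⟩
  obtain ⟨k, rfl | rfl⟩ := Int.even_or_odd' m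
  · refine ⟨shear k, Or.inl ?_⟩
    simpa using semiconjBy_shear k (2 * k)
  · refine ⟨lower * shear k, Or.inr ?_⟩
    have h := semiconjBy_shear k (2 * k + 1)
    rw [add_sub_cancel_left] at h
    exact semiconjBy_swap.mul_left h

end Matrix

theorem trace_zero_det_neg_one_involution (A : GL (Fin 2) ℤ)
    (htr : A.val.trace = 0) (hdet : A.val.det = -1)
    (hev : ∃ v : Fin 2 → ℤ, v ≠ 0 ∧ A.val.mulVec v = v) :
    A ^ 2 = 1 ∧
      ∃ P : GL (Fin 2) ℤ,
        P.val * A.val * (↑P⁻¹ : Matrix (Fin 2) (Fin 2) ℤ) = !![1, 0; 0, -1] ∨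
        P.val * A.val * (↑P⁻¹ : Matrix (Fin 2) (Fin 2) ℤ) = !![0, 1; 1, 0] := by
  have hsq := Matrix.sq_eq_one_of_trace_eq_zero_of_det_eq_neg_one htr hdet
  refine ⟨Units.ext (by simpa using hsq), ?_⟩
  obtain ⟨v, hv, hAv⟩ := hev
  obtain ⟨w, hw, hAw⟩ := Matrix.exists_isCoprime_mulVec_eq_self hv hAv
  obtain ⟨g, hg⟩ := Matrix.SpecialLinearGroup.exists_mulVec_eq_single_of_isCoprime hw
  set P := Matrix.SpecialLinearGroup.toGL g
  set B := P.val * A.val * (↑P⁻¹ : Matrix (Fin 2) (Fin 2) ℤ)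
  have hB : B = !![1, B 0 1; 0, -1] := by
    refine Matrix.eq_of_trace_eq_zero_of_mulVec_single_eq_self
      (by rw [Matrix.trace_units_conj, htr]) ?_
    rw [← hg, ← Matrix.SpecialLinearGroup.coe_GL_coe_matrix, Matrix.units_conj_mulVec_mulVec, hAw]
  obtain ⟨Q, hQ⟩ := Matrix.exists_semiconjBy_diag_or_swap (B 0 1)
  rw [← hB] at hQ
  refine ⟨Q * P, ?_⟩
  simp only [Units.mul_inv_eq_iff_eq_mul]
  exact hQ.imp (·.mul_left (Units.mk_semiconjBy P A.val)) (·.mul_left (Units.mk_semiconjBy P A.val))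
end

section
/- The matrices ε = [[-1,0],[0,1]] and τ = [[0,1],[1,0]] are not conjugate in GL(2,ℤ). -/
theorem eps_tau_not_conjugate :
    ¬ ∃ P : GL (Fin 2) ℤ,
        P.val * !![(-1 : ℤ), 0; 0, 1] * (↑P⁻¹ : Matrix (Fin 2) (Fin 2) ℤ) =
          !![0, 1; 1, 0] := by
  rintro ⟨P, h⟩
  have hinv : (↑P⁻¹ : Matrix (Fin 2) (Fin 2) ℤ) * P.val = 1 := P.inv_mul
  have h2 : P.val * !![(-1 : ℤ), 0; 0, 1] = !![0, 1; 1, 0] * P.val := by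
    calc P.val * !![(-1 : ℤ), 0; 0, 1]
        = P.val * !![(-1 : ℤ), 0; 0, 1] * ((↑P⁻¹ : Matrix (Fin 2) (Fin 2) ℤ) * P.val) := by
          rw [hinv, mul_one]
      _ = !![0, 1; 1, 0] * P.val := by rw [← mul_assoc, h, ]
  have e00 := congrFun (congrFun h2 0) 0
  have e01 := congrFun (congrFun h2 0) 1
  have e10 := congrFun (congrFun h2 1) 0
  have e11 := congrFun (congrFun h2 1) 1
  simp [Matrix.mul_apply, Fin.sum_univ_two] at e00 e01 e10 e11
  have hdet : IsUnit P.val.det := (Matrix.isUnit_iff_isUnit_det _).mp P.isUnit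
  rw [Matrix.det_fin_two] at hdet
  rw [Int.isUnit_iff] at hdet
  rw [← e00, ← e01] at hdet
  have key : 2 * (P.val 0 0 * P.val 0 1) = 1 ∨ 2 * (P.val 0 0 * P.val 0 1) = -1 := by
    rcases hdet with h' | h'
    · left; linear_combination h'
    · right; linear_combination h'
  generalize P.val 0 0 * P.val 0 1 = x at key
  omega
end

section
/- For φ = -U(n) = [[-1,-n],[0,-1]] with n > 0, the cokernel ℤ²/im(φ - I) is isomorphic to ℤ/4 if n is odd and to ℤ/2 ⊕ ℤ/2 if n is even. -/
/-- The cokernel `ℤ² / im A` of a 2×2 integer matrix acting on `ℤ²`. -/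
abbrev Coker (A : Matrix (Fin 2) (Fin 2) ℤ) :=
  (Fin 2 → ℤ) ⧸ LinearMap.range (Matrix.mulVecLin A)

private def foddMap : (Fin 2 → ℤ) →ₗ[ℤ] ZMod 4 where
  toFun v := ((2 * v 0 + v 1 : ℤ) : ZMod 4)
  map_add' x y := by simp only [Pi.add_apply]; push_cast; ring
  map_smul' c x := by
    simp only [Pi.smul_apply, smul_eq_mul, RingHom.id_apply, zsmul_eq_mul]; push_cast; ring

private def fevenMap : (Fin 2 → ℤ) →ₗ[ℤ] ZMod 2 × ZMod 2 where
  toFun v := (((v 0 : ℤ) : ZMod 2), ((v 1 : ℤ) : ZMod 2))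
  map_add' x y := by simp only [Pi.add_apply]; push_cast; rfl
  map_smul' c x := by
    simp only [Pi.smul_apply, smul_eq_mul, RingHom.id_apply, Prod.smul_mk, zsmul_eq_mul]
    push_cast; rfl

theorem coker_neg_unipotent (n : ℕ) (hn : 0 < n) :
    (Odd n → Nonempty (Coker (!![(-1 : ℤ), -(n : ℤ); 0, -1] - 1) ≃+ ZMod 4)) ∧
    (Even n → Nonempty (Coker (!![(-1 : ℤ), -(n : ℤ); 0, -1] - 1) ≃+ ZMod 2 × ZMod 2)) := by
  set A : Matrix (Fin 2) (Fin 2) ℤ := !![(-1 : ℤ), -(n : ℤ); 0, -1] - 1 with hAdef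
  have hmul : ∀ w : Fin 2 → ℤ, A.mulVec w = ![-2 * w 0 - n * w 1, -2 * w 1] := by
    intro w
    funext i
    fin_cases i <;>
      simp [hAdef, Matrix.mulVec, dotProduct, Fin.sum_univ_two, Matrix.one_apply] <;> ring
  constructor
  · rintro ⟨k, hk⟩
    have hk' : (n : ℤ) = 2 * k + 1 := by exact_mod_cast hk
    have hsurj : Function.Surjective foddMap := by
      intro z
      obtain ⟨x, hx⟩ := ZMod.intCast_surjective (n := 4) z
      exact ⟨![0, x], by simp [foddMap, hx]⟩
    have hker : LinearMap.ker foddMap = LinearMap.range (Matrix.mulVecLin A) := by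
      ext v
      constructor
      · intro hv
        simp only [LinearMap.mem_ker, foddMap, LinearMap.coe_mk, AddHom.coe_mk] at hv
        rw [ZMod.intCast_zmod_eq_zero_iff_dvd] at hv
        obtain ⟨t, ht⟩ := hv
        have ht' : 2 * v 0 + v 1 = 4 * t := by push_cast at ht; linarith
        refine ⟨![-((k + 1) * v 0 - n * t), v 0 - 2 * t], ?_⟩
        rw [Matrix.mulVecLin_apply, hmul]
        funext i
        fin_cases i <;> simp
        · linear_combination (-(v 0)) * hk'
        · linear_combination -ht'
      · rintro ⟨w, rfl⟩
        simp only [LinearMap.mem_ker, foddMap, LinearMap.coe_mk, AddHom.coe_mk,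
          Matrix.mulVecLin_apply, hmul, Matrix.cons_val_zero, Matrix.cons_val_one,
          Matrix.head_cons]
        have : (2 * (-2 * w 0 - (n : ℤ) * w 1) + -2 * w 1)
            = 4 * (-(w 0) - (k + 1) * w 1) := by rw [hk']; ring
        rw [this, Int.cast_mul]
        exact mul_eq_zero_of_left (by decide) _
    exact ⟨((Submodule.quotEquivOfEq _ _ hker.symm).trans
      (foddMap.quotKerEquivOfSurjective hsurj)).toAddEquiv⟩
  · rintro ⟨m, hm⟩
    have hm' : (n : ℤ) = 2 * m := by push_cast [hm]; ring
    have hsurj : Function.Surjective fevenMap := by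
      rintro ⟨z1, z2⟩
      obtain ⟨x1, hx1⟩ := ZMod.intCast_surjective (n := 2) z1
      obtain ⟨x2, hx2⟩ := ZMod.intCast_surjective (n := 2) z2
      exact ⟨![x1, x2], by simp [fevenMap, hx1, hx2]⟩
    have hker : LinearMap.ker fevenMap = LinearMap.range (Matrix.mulVecLin A) := by
      ext v
      constructor
      · intro hv
        simp only [LinearMap.mem_ker, fevenMap, LinearMap.coe_mk, AddHom.coe_mk,
          Prod.mk_eq_zero] at hv
        obtain ⟨h0, h1⟩ := hv
        rw [ZMod.intCast_zmod_eq_zero_iff_dvd] at h0 h1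
        obtain ⟨a, ha⟩ := h0
        obtain ⟨b, hb⟩ := h1
        have ha' : v 0 = 2 * a := by push_cast at ha; linarith
        have hb' : v 1 = 2 * b := by push_cast at hb; linarith
        refine ⟨![m * b - a, -b], ?_⟩
        rw [Matrix.mulVecLin_apply, hmul]
        funext i
        fin_cases i <;> simp
        · linear_combination b * hm' - ha'
        · linear_combination -hb'
      · rintro ⟨w, rfl⟩
        simp only [LinearMap.mem_ker, fevenMap, LinearMap.coe_mk, AddHom.coe_mk,
          Matrix.mulVecLin_apply, hmul, Prod.mk_eq_zero, Matrix.cons_val_zero,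
          Matrix.cons_val_one, Matrix.head_cons]
        constructor
        · have : (-2 * w 0 - (n : ℤ) * w 1) = 2 * (-(w 0) - m * w 1) := by rw [hm']; ring
          rw [this, Int.cast_mul]
          exact mul_eq_zero_of_left (by decide) _
        · have : (-2 * w 1 : ℤ) = 2 * (-(w 1)) := by ring
          rw [this, Int.cast_mul]
          exact mul_eq_zero_of_left (by decide) _
    exact ⟨((Submodule.quotEquivOfEq _ _ hker.symm).trans
      (fevenMap.quotKerEquivOfSurjective hsurj)).toAddEquiv⟩
end
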